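/- arXiv:2111.05121 — 5 statements merged into one kernel-verified Lean document; each statement's English description precedes it below -/
import Mathlib

section
/- Let H be a finite-dimensional real Hilbert space, let A, B, C be linear operators on H, let a₁,…,a_m > 0, b₁,…,b_m > 0, and set k̃(t) = Σ_{i=1}^m a_i exp(−b_i t). Suppose v, v₁, …, v_m : [0,∞) → H are continuously differentiable, f : [0,∞) → H is continuous, and for all t > 0: B v′(t) + Σ_{i=1}^m a_i C v_i(t) + A v(t) = f(t), v_i′(t) + b_i v_i(t) − v′(t) = 0 for each i, with v(0) = u₀ and v_i(0) = 0 for each i. Then v solves the nonlocal problem: B v′(t) + ∫₀^t k̃(t−s) C v′(s) ds + A v(t) = f(t) for all t > 0, and v(0) = u₀. -/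
/-!
Each auxiliary equation `vᵢ' + bᵢ vᵢ = v'` with `vᵢ(0) = 0` is solved by variation of constants,
`vᵢ(t) = ∫₀ᵗ exp(-bᵢ (t - s)) v'(s) ds`. Substituting this into `Σᵢ aᵢ C vᵢ(t)` and moving the
finite sum, the scalars and `C` inside the integral gives exactly the memory term
`∫₀ᵗ k̃(t - s) C v'(s) ds` of the nonlocal equation.
-/

open MeasureTheory Set Real

theorem eq_integral_exp_smul_of_hasDerivAt {E : Type*} [NormedAddCommGroup E] [NormedSpace ℝ E]
    [CompleteSpace E] {w g : ℝ → E} {β t : ℝ} (ht : 0 ≤ t)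
    (hw : ContinuousOn w (Icc 0 t)) (hderiv : ∀ s ∈ Ioo 0 t, HasDerivAt w (g s - β • w s) s)
    (hg : ContinuousOn g (Icc 0 t)) (hw₀ : w 0 = 0) :
    w t = ∫ s in (0:ℝ)..t, exp (-β * (t - s)) • g s := by
  have hexp : ∀ s, HasDerivAt (fun s => exp (β * s)) (β * exp (β * s)) s := fun s => by
    simpa [mul_comm] using ((hasDerivAt_id s).const_mul β).exp
  have hint : IntervalIntegrable (fun s => exp (β * s) • g s) volume 0 t :=
    ((by fun_prop : Continuous fun s => exp (β * s)).continuousOn.smul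
      (hg.mono (by rw [uIcc_of_le ht]))).intervalIntegrable
  -- `exp (β s) • w s` is an antiderivative of `exp (β s) • g s`
  have hftc : exp (β * t) • w t = ∫ s in (0:ℝ)..t, exp (β * s) • g s := by
    rw [intervalIntegral.integral_eq_sub_of_hasDeriv_right_of_le
      (f := fun s => exp (β * s) • w s) ht
      ((by fun_prop : Continuous fun s => exp (β * s)).continuousOn.smul hw)
      (fun s hs => ?_) hint, hw₀, smul_zero, sub_zero]
    refine (((hexp s).smul (hderiv s hs)).congr_deriv ?_).hasDerivWithinAt
    rw [smul_sub, smul_smul, mul_comm β (exp (β * s)), sub_add_cancel]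
  calc w t = exp (-β * t) • exp (β * t) • w t := by
        rw [smul_smul, ← exp_add, neg_mul, neg_add_cancel, exp_zero, one_smul]
    _ = ∫ s in (0:ℝ)..t, exp (-β * (t - s)) • g s := by
        rw [hftc, ← intervalIntegral.integral_smul]
        refine intervalIntegral.integral_congr fun s _ => ?_
        rw [smul_smul, ← exp_add]
        ring_nf

theorem intervalIntegral_sum_mul_smul_clm {E F : Type*} [NormedAddCommGroup E] [NormedSpace ℝ E]
    [CompleteSpace E] [NormedAddCommGroup F] [NormedSpace ℝ F] [CompleteSpace F] {ι : Type*}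
    (s : Finset ι) (L : E →L[ℝ] F) (c : ι → ℝ) {κ : ι → ℝ → ℝ} {g : ℝ → E} {t₀ t₁ : ℝ}
    (hκ : ∀ i ∈ s, ContinuousOn (κ i) (uIcc t₀ t₁)) (hg : ContinuousOn g (uIcc t₀ t₁)) :
    ∫ x in t₀..t₁, (∑ i ∈ s, c i * κ i x) • L (g x)
      = ∑ i ∈ s, c i • L (∫ x in t₀..t₁, κ i x • g x) := by
  have hint : ∀ i ∈ s, IntervalIntegrable (fun x => κ i x • g x) volume t₀ t₁ := fun i hi =>
    ((hκ i hi).smul hg).intervalIntegrable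
  have hint_sum : IntervalIntegrable (fun x => ∑ i ∈ s, c i • κ i x • g x) volume t₀ t₁ :=
    (continuousOn_finsetSum s fun i hi => ((hκ i hi).smul hg).const_smul (c i)).intervalIntegrable
  calc ∫ x in t₀..t₁, (∑ i ∈ s, c i * κ i x) • L (g x)
      = ∫ x in t₀..t₁, L (∑ i ∈ s, c i • κ i x • g x) := by
        simp only [map_sum, map_smul, Finset.sum_smul, smul_smul]
    _ = L (∑ i ∈ s, c i • ∫ x in t₀..t₁, κ i x • g x) := by
        rw [L.intervalIntegral_comp_comm hint_sum,
          intervalIntegral.integral_finsetSum (f := fun i x => c i • κ i x • g x)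
            fun i hi => (hint i hi).smul _]
        simp only [intervalIntegral.integral_smul]
    _ = ∑ i ∈ s, c i • L (∫ x in t₀..t₁, κ i x • g x) := by
        simp only [map_sum, map_smul]

theorem local_system_to_nonlocal_general
    {H : Type*} [NormedAddCommGroup H] [InnerProductSpace ℝ H] [FiniteDimensional ℝ H]
    (A B C : H →ₗ[ℝ] H)
    (m : ℕ) (a b : Fin m → ℝ)
    (f : ℝ → H)
    (v v' : ℝ → H) (vi vi' : Fin m → ℝ → H)
    (hv' : ContinuousOn v' (Set.Ici 0))
    (hvi : ∀ i, ∀ t ∈ Set.Ici (0:ℝ), HasDerivWithinAt (vi i) (vi' i t) (Set.Ici 0) t)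
    (u₀ : H) (hv₀ : v 0 = u₀) (hvi₀ : ∀ i, vi i 0 = 0)
    (heq : ∀ t > (0:ℝ), B (v' t) + (∑ i, a i • C (vi i t)) + A (v t) = f t)
    (heqi : ∀ i, ∀ t > (0:ℝ), vi' i t + b i • vi i t - v' t = 0) :
    (∀ t > (0:ℝ),
      B (v' t) + (∫ s in (0:ℝ)..t, (∑ i, a i * Real.exp (-(b i) * (t - s))) • C (v' s))
        + A (v t) = f t) ∧ v 0 = u₀ := by
  refine ⟨fun t ht => ?_, hv₀⟩
  have hvi_rep : ∀ i, vi i t = ∫ s in (0:ℝ)..t, exp (-b i * (t - s)) • v' s := fun i =>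
    eq_integral_exp_smul_of_hasDerivAt ht.le
      (fun s hs => ((hvi i s hs.1).continuousWithinAt).mono Icc_subset_Ici_self)
      (fun s hs => by
        rw [← sub_eq_zero.mp (heqi i s hs.1), add_sub_cancel_right]
        exact (hvi i s hs.1.le).hasDerivAt (Ici_mem_nhds hs.1))
      (hv'.mono Icc_subset_Ici_self) (hvi₀ i)
  have hmemory := intervalIntegral_sum_mul_smul_clm Finset.univ (LinearMap.toContinuousLinearMap C)
    a (κ := fun i s => exp (-b i * (t - s))) (fun i _ => by fun_prop)
    (hv'.mono (by rw [uIcc_of_le ht.le]; exact Icc_subset_Ici_self))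
  simp only [LinearMap.coe_toContinuousLinearMap'] at hmemory
  rw [hmemory, ← heq t ht]
  simp only [hvi_rep]

/-- Converse transformation: a solution of the local weakly coupled system
`B v' + Σᵢ aᵢ C vᵢ + A v = f`, `vᵢ' + bᵢ vᵢ - v' = 0`, `v(0) = u₀`,
`vᵢ(0) = 0`, solves the nonlocal problem with kernel
`k̃(t) = Σᵢ aᵢ exp(-bᵢ t)`. -/
theorem local_system_to_nonlocal
    {H : Type*} [NormedAddCommGroup H] [InnerProductSpace ℝ H] [FiniteDimensional ℝ H]
    (A B C : H →ₗ[ℝ] H)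
    (m : ℕ) (a b : Fin m → ℝ) (ha : ∀ i, 0 < a i) (hb : ∀ i, 0 < b i)
    (f : ℝ → H) (hf : ContinuousOn f (Set.Ici 0))
    (v v' : ℝ → H) (vi vi' : Fin m → ℝ → H)
    (hv : ∀ t ∈ Set.Ici (0:ℝ), HasDerivWithinAt v (v' t) (Set.Ici 0) t)
    (hv' : ContinuousOn v' (Set.Ici 0))
    (hvi : ∀ i, ∀ t ∈ Set.Ici (0:ℝ), HasDerivWithinAt (vi i) (vi' i t) (Set.Ici 0) t)
    (hvi' : ∀ i, ContinuousOn (vi' i) (Set.Ici 0))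
    (u₀ : H) (hv₀ : v 0 = u₀) (hvi₀ : ∀ i, vi i 0 = 0)
    (heq : ∀ t > (0:ℝ), B (v' t) + (∑ i, a i • C (vi i t)) + A (v t) = f t)
    (heqi : ∀ i, ∀ t > (0:ℝ), vi' i t + b i • vi i t - v' t = 0) :
    (∀ t > (0:ℝ),
      B (v' t) + (∫ s in (0:ℝ)..t, (∑ i, a i * Real.exp (-(b i) * (t - s))) • C (v' s))
        + A (v t) = f t) ∧ v 0 = u₀ :=
  local_system_to_nonlocal_general A B C m a b f v v' vi vi' hv' hvi u₀ hv₀ hvi₀ heq heqi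
end

section
/- (Theorem 2) Let H be a finite-dimensional real Hilbert space and let A, B, C be self-adjoint positive definite linear operators on H. Let a₁,…,a_m > 0 and b₁,…,b_m > 0. Suppose v, v₁, …, v_m : [0,∞) → H are continuously differentiable, f : [0,∞) → H is continuous, and for all t > 0: (B + Σ_{i=1}^m (a_i/b_i) C) v′(t) − Σ_{i=1}^m (a_i/b_i) C v_i′(t) + A v(t) = f(t), and v_i′(t) + b_i v_i(t) − v′(t) = 0 for each i = 1,…,m, with v(0) = u₀ and v_i(0) = 0 for each i. Then for all t > 0: ⟪A v(t), v(t)⟫ + Σ_{i=1}^m a_i ⟪C v_i(t), v_i(t)⟫ ≤ ⟪A u₀, u₀⟫ + (1/2) ∫₀^t ⟪B⁻¹ f(s), f(s)⟫ ds. -/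
open scoped RealInnerProductSpace
open MeasureTheory

/-! Pairing the first equation with `v'` and substituting `vᵢ' = v' - bᵢ vᵢ` shows that the
energy `E = ⟪A v, v⟫ + ∑ aᵢ ⟪C vᵢ, vᵢ⟫` satisfies
`E' = 2 ⟪f, v'⟫ - 2 ⟪B v', v'⟫ - 2 ∑ aᵢ bᵢ ⟪C vᵢ, vᵢ⟫`. The last sum is nonnegative, and
Young's inequality for the form of `B` bounds the rest by `½ ⟪B⁻¹ f, f⟫`; integrating this
differential inequality over `[0, t]` gives the estimate. -/

section

variable {H : Type*} [NormedAddCommGroup H] [InnerProductSpace ℝ H]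

theorem LinearMap.IsSymmetric.isPositive_of_coercive {A : H →ₗ[ℝ] H} (hA : A.IsSymmetric)
    (hcoer : ∃ ν > (0 : ℝ), ∀ x : H, ν * ‖x‖ ^ 2 ≤ ⟪A x, x⟫) : A.IsPositive := by
  obtain ⟨ν, hν, h⟩ := hcoer
  exact ⟨hA, fun x => by simpa using (by positivity : 0 ≤ ν * ‖x‖ ^ 2).trans (h x)⟩

theorem LinearMap.IsPositive.two_inner_sub_le {B : H →ₗ[ℝ] H} (hB : B.IsPositive)
    (x y : H) : 2 * ⟪B x, y⟫ - 2 * ⟪B y, y⟫ ≤ 1 / 2 * ⟪B x, x⟫ := by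
  -- expand `0 ≤ ⟪B (2y - x), 2y - x⟫`
  have hsq := hB.re_inner_nonneg_left ((2 : ℝ) • y - x)
  have hsymm : ⟪B y, x⟫ = ⟪B x, y⟫ := by rw [hB.isSymmetric, real_inner_comm]
  simp only [RCLike.re_to_real, map_sub, map_smul, inner_sub_left, inner_sub_right,
    real_inner_smul_left, real_inner_smul_right, hsymm] at hsq
  linarith

theorem HasDerivWithinAt.inner_map_self [FiniteDimensional ℝ H] {A : H →ₗ[ℝ] H}
    (hA : A.IsSymmetric) {u : ℝ → H} {u' : H} {s : Set ℝ} {t : ℝ}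
    (hu : HasDerivWithinAt u u' s t) :
    HasDerivWithinAt (fun r => ⟪A (u r), u r⟫) (2 * ⟪A (u t), u'⟫) s t := by
  have hAu : HasDerivWithinAt (fun r => A (u r)) (A u') s t :=
    A.toContinuousLinearMap.hasFDerivAt.comp_hasDerivWithinAt t hu
  have h := hAu.inner ℝ hu
  rwa [hA u' (u t), real_inner_comm (A (u t)) u', ← two_mul] at h

end

namespace LocalSystem

variable {H : Type*} [NormedAddCommGroup H] [InnerProductSpace ℝ H]
variable {ι : Type*} [Fintype ι]

def energy (A C : H →ₗ[ℝ] H) (a : ι → ℝ) (x : H) (y : ι → H) : ℝ :=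
  ⟪A x, x⟫ + ∑ i, a i * ⟪C (y i), y i⟫

theorem hasDerivWithinAt_energy [FiniteDimensional ℝ H] {A C : H →ₗ[ℝ] H}
    (hA : A.IsSymmetric) (hC : C.IsSymmetric) (a : ι → ℝ) {u : ℝ → H} {u' : H}
    {w : ι → ℝ → H} {w' : ι → H} {s : Set ℝ} {t : ℝ}
    (hu : HasDerivWithinAt u u' s t) (hw : ∀ i, HasDerivWithinAt (w i) (w' i) s t) :
    HasDerivWithinAt (fun r => energy A C a (u r) (fun i => w i r))
      (2 * ⟪A (u t), u'⟫ + ∑ i, a i * (2 * ⟪C (w i t), w' i⟫)) s t :=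
  (hu.inner_map_self hA).add
    (HasDerivWithinAt.fun_sum fun i _ => ((hw i).inner_map_self hC).const_mul (a i))

theorem inner_add_sum_eq_of_local_system (A B C : H →ₗ[ℝ] H) {a b : ι → ℝ}
    (hb : ∀ i, b i ≠ 0) {x V F : H} {y W : ι → H}
    (heq : (B V + ∑ i, (a i / b i) • C V) - ∑ i, (a i / b i) • C (W i) + A x = F)
    (heqi : ∀ i, W i + b i • y i - V = 0) :
    ⟪A x, V⟫ + ∑ i, a i * ⟪C (y i), W i⟫
      = ⟪F, V⟫ - ⟪B V, V⟫ - ∑ i, a i * b i * ⟪C (y i), y i⟫ := by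
  have hW : ∀ i, W i = V - b i • y i := fun i => eq_sub_of_add_eq (sub_eq_zero.mp (heqi i))
  have hcoupling :
      ∑ i, (a i / b i) • C V - ∑ i, (a i / b i) • C (W i) = ∑ i, a i • C (y i) := by
    rw [← Finset.sum_sub_distrib]
    refine Finset.sum_congr rfl fun i _ => ?_
    rw [← smul_sub, ← map_sub, hW i, sub_sub_cancel, map_smul, smul_smul,
      div_mul_cancel₀ _ (hb i)]
  rw [← heq, add_sub_assoc, hcoupling]
  simp only [hW, inner_add_left, inner_sub_right, sum_inner, real_inner_smul_left,
    real_inner_smul_right, mul_sub, Finset.sum_sub_distrib, mul_assoc]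
  ring

theorem energy_rate_le {A B C Binv : H →ₗ[ℝ] H} (hB : B.IsPositive) (hC : C.IsPositive)
    (hBinv : ∀ x, B (Binv x) = x) {a b : ι → ℝ} (ha : ∀ i, 0 ≤ a i) (hb : ∀ i, 0 < b i)
    {x V F : H} {y W : ι → H}
    (heq : (B V + ∑ i, (a i / b i) • C V) - ∑ i, (a i / b i) • C (W i) + A x = F)
    (heqi : ∀ i, W i + b i • y i - V = 0) :
    2 * ⟪A x, V⟫ + ∑ i, a i * (2 * ⟪C (y i), W i⟫) ≤ 1 / 2 * ⟪Binv F, F⟫ := by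
  have hbalance := inner_add_sum_eq_of_local_system A B C (fun i => (hb i).ne') heq heqi
  have hdamping : 0 ≤ ∑ i, a i * b i * ⟪C (y i), y i⟫ := Finset.sum_nonneg fun i _ =>
    mul_nonneg (mul_nonneg (ha i) (hb i).le) (by simpa using hC.re_inner_nonneg_left (y i))
  have hyoung := hB.two_inner_sub_le (Binv F) V
  rw [hBinv, real_inner_comm (Binv F) F] at hyoung
  have hsum : ∑ i, a i * (2 * ⟪C (y i), W i⟫) = 2 * ∑ i, a i * ⟪C (y i), W i⟫ := by
    rw [Finset.mul_sum]; exact Finset.sum_congr rfl fun i _ => by ring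
  rw [hsum]
  linarith

end LocalSystem

theorem stability_local_system_general
    {H : Type*} [NormedAddCommGroup H] [InnerProductSpace ℝ H] [FiniteDimensional ℝ H]
    (A B C Binv : H →ₗ[ℝ] H)
    (hAsa : ∀ x y : H, ⟪A x, y⟫ = ⟪x, A y⟫)
    (hBsa : ∀ x y : H, ⟪B x, y⟫ = ⟪x, B y⟫)
    (hCsa : ∀ x y : H, ⟪C x, y⟫ = ⟪x, C y⟫)
    (hBpd : ∃ ν > (0:ℝ), ∀ x : H, ν * ‖x‖ ^ 2 ≤ ⟪B x, x⟫)
    (hCpd : ∃ ν > (0:ℝ), ∀ x : H, ν * ‖x‖ ^ 2 ≤ ⟪C x, x⟫)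
    (hBinv₁ : ∀ x : H, B (Binv x) = x)
    (m : ℕ) (a b : Fin m → ℝ) (ha : ∀ i, 0 < a i) (hb : ∀ i, 0 < b i)
    (f : ℝ → H) (hf : ContinuousOn f (Set.Ici 0))
    (v v' : ℝ → H) (vi vi' : Fin m → ℝ → H)
    (hv : ∀ t ∈ Set.Ici (0:ℝ), HasDerivWithinAt v (v' t) (Set.Ici 0) t)
    (hvi : ∀ i, ∀ t ∈ Set.Ici (0:ℝ), HasDerivWithinAt (vi i) (vi' i t) (Set.Ici 0) t)
    (u₀ : H) (hv₀ : v 0 = u₀) (hvi₀ : ∀ i, vi i 0 = 0)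
    (heq : ∀ t > (0:ℝ),
      (B (v' t) + ∑ i, (a i / b i) • C (v' t)) - (∑ i, (a i / b i) • C (vi' i t))
        + A (v t) = f t)
    (heqi : ∀ i, ∀ t > (0:ℝ), vi' i t + b i • vi i t - v' t = 0) :
    ∀ t > (0:ℝ),
      ⟪A (v t), v t⟫ + (∑ i, a i * ⟪C (vi i t), vi i t⟫)
        ≤ ⟪A u₀, u₀⟫ + (1 / 2) * ∫ s in (0:ℝ)..t, ⟪Binv (f s), f s⟫ := by
  intro t ht
  have hB : B.IsPositive := LinearMap.IsSymmetric.isPositive_of_coercive hBsa hBpd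
  have hC : C.IsPositive := LinearMap.IsSymmetric.isPositive_of_coercive hCsa hCpd
  set E : ℝ → ℝ := fun s => LocalSystem.energy A C a (v s) (fun i => vi i s) with hE
  have hEderiv : ∀ s ∈ Set.Ici (0 : ℝ), HasDerivWithinAt E
      (2 * ⟪A (v s), v' s⟫ + ∑ i, a i * (2 * ⟪C (vi i s), vi' i s⟫)) (Set.Ici 0) s :=
    fun s hs => LocalSystem.hasDerivWithinAt_energy hAsa hCsa a (hv s hs) fun i => hvi i s hs
  have hsource : ContinuousOn (fun s => 1 / 2 * ⟪Binv (f s), f s⟫) (Set.Ici 0) :=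
    continuousOn_const.mul ((Binv.continuous_of_finiteDimensional.comp_continuousOn hf).inner hf)
  have hbound := intervalIntegral.sub_le_integral_of_hasDeriv_right_of_le ht.le
    (fun s hs => (hEderiv s hs.1).continuousWithinAt.mono Set.Icc_subset_Ici_self)
    (fun s hs => ((hEderiv s hs.1.le).hasDerivAt (Ici_mem_nhds hs.1)).hasDerivWithinAt)
    ((hsource.mono Set.Icc_subset_Ici_self).integrableOn_Icc)
    (fun s hs => LocalSystem.energy_rate_le hB hC hBinv₁ (fun i => (ha i).le) hb (heq s hs.1)
      fun i => heqi i s hs.1)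
  have hE0 : E 0 = ⟪A u₀, u₀⟫ := by simp [hE, LocalSystem.energy, hv₀, hvi₀]
  rw [intervalIntegral.integral_const_mul] at hbound
  simp only [hE, LocalSystem.energy] at hbound hE0
  linarith

/-- **Theorem 2.** Stability estimate for the local system obtained after
approximating the kernel by a sum of exponentials:
`‖v(t)‖²_A + Σᵢ aᵢ ‖vᵢ(t)‖²_C ≤ ‖u₀‖²_A + (1/2) ∫₀ᵗ ‖f(s)‖²_{B⁻¹} ds`. -/
theorem stability_local_system
    {H : Type*} [NormedAddCommGroup H] [InnerProductSpace ℝ H] [FiniteDimensional ℝ H]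
    (A B C Binv : H →ₗ[ℝ] H)
    (hAsa : ∀ x y : H, ⟪A x, y⟫ = ⟪x, A y⟫)
    (hBsa : ∀ x y : H, ⟪B x, y⟫ = ⟪x, B y⟫)
    (hCsa : ∀ x y : H, ⟪C x, y⟫ = ⟪x, C y⟫)
    (hApd : ∃ ν > (0:ℝ), ∀ x : H, ν * ‖x‖ ^ 2 ≤ ⟪A x, x⟫)
    (hBpd : ∃ ν > (0:ℝ), ∀ x : H, ν * ‖x‖ ^ 2 ≤ ⟪B x, x⟫)
    (hCpd : ∃ ν > (0:ℝ), ∀ x : H, ν * ‖x‖ ^ 2 ≤ ⟪C x, x⟫)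
    (hBinv₁ : ∀ x : H, B (Binv x) = x)
    (hBinv₂ : ∀ x : H, Binv (B x) = x)
    (m : ℕ) (a b : Fin m → ℝ) (ha : ∀ i, 0 < a i) (hb : ∀ i, 0 < b i)
    (f : ℝ → H) (hf : ContinuousOn f (Set.Ici 0))
    (v v' : ℝ → H) (vi vi' : Fin m → ℝ → H)
    (hv : ∀ t ∈ Set.Ici (0:ℝ), HasDerivWithinAt v (v' t) (Set.Ici 0) t)
    (hv' : ContinuousOn v' (Set.Ici 0))
    (hvi : ∀ i, ∀ t ∈ Set.Ici (0:ℝ), HasDerivWithinAt (vi i) (vi' i t) (Set.Ici 0) t)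
    (hvi' : ∀ i, ContinuousOn (vi' i) (Set.Ici 0))
    (u₀ : H) (hv₀ : v 0 = u₀) (hvi₀ : ∀ i, vi i 0 = 0)
    (heq : ∀ t > (0:ℝ),
      (B (v' t) + ∑ i, (a i / b i) • C (v' t)) - (∑ i, (a i / b i) • C (vi' i t))
        + A (v t) = f t)
    (heqi : ∀ i, ∀ t > (0:ℝ), vi' i t + b i • vi i t - v' t = 0) :
    ∀ t > (0:ℝ),
      ⟪A (v t), v t⟫ + (∑ i, a i * ⟪C (vi i t), vi i t⟫)
        ≤ ⟪A u₀, u₀⟫ + (1 / 2) * ∫ s in (0:ℝ)..t, ⟪Binv (f s), f s⟫ :=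
  stability_local_system_general A B C Binv hAsa hBsa hCsa hBpd hCpd hBinv₁ m a b ha hb f hf v v' vi
    vi' hv hvi u₀ hv₀ hvi₀ heq heqi
end

section
/- Let H be a finite-dimensional real Hilbert space and let A, B, C be self-adjoint linear operators on H. Let a₁,…,a_m > 0 and b₁,…,b_m > 0. Suppose v, v₁, …, v_m : [0,∞) → H are continuously differentiable, f : [0,∞) → H is continuous, and for all t > 0: (B + Σ_{i=1}^m (a_i/b_i) C) v′(t) − Σ_{i=1}^m (a_i/b_i) C v_i′(t) + A v(t) = f(t), and v_i′(t) + b_i v_i(t) − v′(t) = 0 for each i. Then the energy function E(t) = ⟪A v(t), v(t)⟫ + Σ_{i=1}^m a_i ⟪C v_i(t), v_i(t)⟫ is differentiable on (0,∞) and satisfies, for all t > 0, E′(t) = 2 ⟪f(t), v′(t)⟫ − 2 ⟪B v′(t), v′(t)⟫ − 2 Σ_{i=1}^m (a_i/b_i) ⟪C (v′(t) − v_i′(t)), v′(t) − v_i′(t)⟫. -/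
/-!
By symmetry of `A` and `C`, `E' = 2⟪A v, v'⟫ + 2 Σᵢ aᵢ ⟪C vᵢ, vᵢ'⟫`. Pairing the first equation
with `v'` and writing `v' - vᵢ' = bᵢ vᵢ`, the identity
`⟪C p, p⟫ - ⟪C q, p⟫ - ⟪C (p - q), p - q⟫ = ⟪C (p - q), q⟫` (with `p = v'`, `q = vᵢ'`) turns
each memory term `(aᵢ/bᵢ)(⟪C v', v'⟫ - ⟪C vᵢ', v'⟫ - ⟪C (v' - vᵢ'), v' - vᵢ'⟫)` into
`aᵢ ⟪C vᵢ, vᵢ'⟫`, which is exactly the rate of change of the stored energy.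
-/

open scoped RealInnerProductSpace

section

variable {H : Type*} [NormedAddCommGroup H] [InnerProductSpace ℝ H]

theorem LinearMap.IsSymmetric.hasDerivAt_inner_apply_self [FiniteDimensional ℝ H]
    {T : H →ₗ[ℝ] H} (hT : T.IsSymmetric) {x : ℝ → H} {x' : H} {t : ℝ}
    (hx : HasDerivAt x x' t) :
    HasDerivAt (fun s => ⟪T (x s), x s⟫) (2 * ⟪T (x t), x'⟫) t := by
  have hTx : HasDerivAt (fun s => T (x s)) (T x') t :=
    T.toContinuousLinearMap.hasFDerivAt.comp_hasDerivAt t hx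
  refine (hTx.inner ℝ hx).congr_deriv ?_
  rw [hT, real_inner_comm]
  ring

theorem LinearMap.inner_sub_inner_sub_inner_sub (C : H →ₗ[ℝ] H) (p q : H) :
    ⟪C p, p⟫ - ⟪C q, p⟫ - ⟪C (p - q), p - q⟫ = ⟪C (p - q), q⟫ := by
  simp only [map_sub, inner_sub_left, inner_sub_right]
  ring

variable {ι : Type*} [Fintype ι]

theorem inner_forcing_sub_dissipation_eq (A B C : H →ₗ[ℝ] H) (a b : ι → ℝ)
    (hb : ∀ i, b i ≠ 0) (v v' : H) (u u' : ι → H) (hu : ∀ i, u' i + b i • u i - v' = 0) :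
    ⟪(B v' + ∑ i, (a i / b i) • C v') - ∑ i, (a i / b i) • C (u' i) + A v, v'⟫
        - ⟪B v', v'⟫ - ∑ i, (a i / b i) * ⟪C (v' - u' i), v' - u' i⟫
      = ⟪A v, v'⟫ + ∑ i, a i * ⟪C (u i), u' i⟫ := by
  have hmemory : ∀ i, (a i / b i) * ⟪C v', v'⟫ - (a i / b i) * ⟪C (u' i), v'⟫
      - (a i / b i) * ⟪C (v' - u' i), v' - u' i⟫ = a i * ⟪C (u i), u' i⟫ := by
    intro i
    have hdiff : v' - u' i = b i • u i := by
      rw [← sub_eq_zero.mp (hu i), add_sub_cancel_left]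
    rw [← mul_sub, ← mul_sub, C.inner_sub_inner_sub_inner_sub, hdiff, map_smul,
      real_inner_smul_left, ← mul_assoc, div_mul_cancel₀ _ (hb i)]
  simp only [inner_add_left, inner_sub_left, sum_inner, real_inner_smul_left]
  rw [← Finset.sum_congr rfl fun i _ => hmemory i]
  simp only [Finset.sum_sub_distrib]
  ring

end

theorem energy_identity_local_system_general
    {H : Type*} [NormedAddCommGroup H] [InnerProductSpace ℝ H] [FiniteDimensional ℝ H]
    (A B C : H →ₗ[ℝ] H)
    (hAsa : ∀ x y : H, ⟪A x, y⟫ = ⟪x, A y⟫)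
    (hCsa : ∀ x y : H, ⟪C x, y⟫ = ⟪x, C y⟫)
    (m : ℕ) (a b : Fin m → ℝ) (hb : ∀ i, 0 < b i)
    (f : ℝ → H)
    (v v' : ℝ → H) (vi vi' : Fin m → ℝ → H)
    (hv : ∀ t ∈ Set.Ici (0:ℝ), HasDerivWithinAt v (v' t) (Set.Ici 0) t)
    (hvi : ∀ i, ∀ t ∈ Set.Ici (0:ℝ), HasDerivWithinAt (vi i) (vi' i t) (Set.Ici 0) t)
    (heq : ∀ t > (0:ℝ),
      (B (v' t) + ∑ i, (a i / b i) • C (v' t)) - (∑ i, (a i / b i) • C (vi' i t))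
        + A (v t) = f t)
    (heqi : ∀ i, ∀ t > (0:ℝ), vi' i t + b i • vi i t - v' t = 0)
    (E : ℝ → ℝ)
    (hE : ∀ t, E t = ⟪A (v t), v t⟫ + ∑ i, a i * ⟪C (vi i t), vi i t⟫) :
    ∀ t > (0:ℝ), HasDerivAt E
      (2 * ⟪f t, v' t⟫ - 2 * ⟪B (v' t), v' t⟫
        - 2 * ∑ i, (a i / b i) * ⟪C (v' t - vi' i t), v' t - vi' i t⟫) t := by
  intro t ht
  have hnhds : Set.Ici (0:ℝ) ∈ nhds t := Ici_mem_nhds ht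
  have hvt := (hv t ht.le).hasDerivAt hnhds
  have hvit := fun i => (hvi i t ht.le).hasDerivAt hnhds
  have hE' : HasDerivAt E
      (2 * ⟪A (v t), v' t⟫ + ∑ i, a i * (2 * ⟪C (vi i t), vi' i t⟫)) t := by
    rw [funext hE]
    exact (LinearMap.IsSymmetric.hasDerivAt_inner_apply_self hAsa hvt).add
      (HasDerivAt.fun_sum fun i _ =>
        ((LinearMap.IsSymmetric.hasDerivAt_inner_apply_self hCsa (hvit i)).const_mul (a i)))
  convert hE' using 1
  have hbalance := inner_forcing_sub_dissipation_eq A B C a b (fun i => (hb i).ne') (v t)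
    (v' t) (vi · t) (vi' · t) (heqi · t ht)
  rw [heq t ht] at hbalance
  simp only [mul_left_comm _ (2:ℝ), ← Finset.mul_sum]
  linear_combination 2 * hbalance

/-- Energy identity for the transformed local system: the energy
`E(t) = ⟪A v, v⟫ + Σᵢ aᵢ ⟪C vᵢ, vᵢ⟫` is differentiable on `(0, ∞)` with
`E'(t) = 2⟪f, v'⟫ - 2⟪B v', v'⟫ - 2 Σᵢ (aᵢ/bᵢ) ⟪C (v' - vᵢ'), v' - vᵢ'⟫`. -/
theorem energy_identity_local_system
    {H : Type*} [NormedAddCommGroup H] [InnerProductSpace ℝ H] [FiniteDimensional ℝ H]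
    (A B C : H →ₗ[ℝ] H)
    (hAsa : ∀ x y : H, ⟪A x, y⟫ = ⟪x, A y⟫)
    (hBsa : ∀ x y : H, ⟪B x, y⟫ = ⟪x, B y⟫)
    (hCsa : ∀ x y : H, ⟪C x, y⟫ = ⟪x, C y⟫)
    (m : ℕ) (a b : Fin m → ℝ) (ha : ∀ i, 0 < a i) (hb : ∀ i, 0 < b i)
    (f : ℝ → H) (hf : ContinuousOn f (Set.Ici 0))
    (v v' : ℝ → H) (vi vi' : Fin m → ℝ → H)
    (hv : ∀ t ∈ Set.Ici (0:ℝ), HasDerivWithinAt v (v' t) (Set.Ici 0) t)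
    (hv' : ContinuousOn v' (Set.Ici 0))
    (hvi : ∀ i, ∀ t ∈ Set.Ici (0:ℝ), HasDerivWithinAt (vi i) (vi' i t) (Set.Ici 0) t)
    (hvi' : ∀ i, ContinuousOn (vi' i) (Set.Ici 0))
    (heq : ∀ t > (0:ℝ),
      (B (v' t) + ∑ i, (a i / b i) • C (v' t)) - (∑ i, (a i / b i) • C (vi' i t))
        + A (v t) = f t)
    (heqi : ∀ i, ∀ t > (0:ℝ), vi' i t + b i • vi i t - v' t = 0)
    (E : ℝ → ℝ)
    (hE : ∀ t, E t = ⟪A (v t), v t⟫ + ∑ i, a i * ⟪C (vi i t), vi i t⟫) :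
    ∀ t > (0:ℝ), HasDerivAt E
      (2 * ⟪f t, v' t⟫ - 2 * ⟪B (v' t), v' t⟫
        - 2 * ∑ i, (a i / b i) * ⟪C (v' t - vi' i t), v' t - vi' i t⟫) t :=
  energy_identity_local_system_general A B C hAsa hCsa m a b hb f v v' vi vi' hv hvi heq heqi E hE
end

section
/- (Theorem 3) Let H be a finite-dimensional real Hilbert space and let A, B, C be self-adjoint positive definite linear operators on H. Let a₁,…,a_m > 0, b₁,…,b_m > 0, τ > 0, and σ ≥ 1/2. Suppose sequences y : ℕ → H, y₁,…,y_m : ℕ → H and φ : ℕ → H satisfy, for all n ≥ 0 (writing y^{n+σ} = σ y^{n+1} + (1−σ) y^n and similarly for y_i): (B + Σ_{i=1}^m (a_i/b_i) C) (y^{n+1} − y^n)/τ − Σ_{i=1}^m (a_i/b_i) C (y_i^{n+1} − y_i^n)/τ + A y^{n+σ} = φ^n, and (y_i^{n+1} − y_i^n)/τ + b_i y_i^{n+σ} − (y^{n+1} − y^n)/τ = 0 for each i, with y^0 = u₀ and y_i^0 = 0 for each i. Then for all n ≥ 0: ⟪A y^{n+1}, y^{n+1}⟫ + Σ_{i=1}^m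 a_i ⟪C y_i^{n+1}, y_i^{n+1}⟫ ≤ ⟪A u₀, u₀⟫ + (1/2) Σ_{k=0}^{n} τ ⟪B⁻¹ φ^k, φ^k⟫. -/
/-!
Energy method. Eliminating the differences of the auxiliary unknowns `yᵢ` with their own
equations turns the scheme into `B (yⁿ⁺¹ - yⁿ)/τ + A yⁿ⁺σ + Σᵢ aᵢ C yᵢⁿ⁺σ = φⁿ`. Pairing this
with `2 (yⁿ⁺¹ - yⁿ)` and using `yⁿ⁺¹ - yⁿ = yᵢⁿ⁺¹ - yᵢⁿ + τ bᵢ yᵢⁿ⁺σ`, each weighted average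
contributes the increment of its quadratic energy plus a nonnegative multiple of `2σ - 1`, and
the right-hand side is absorbed by the `B`-term through `2τ⟪φ, d⟫ ≤ 2⟪B d, d⟫ + τ²/2 ⟪B⁻¹φ, φ⟫`.
So the energy grows by at most `τ/2 ⟪B⁻¹φⁿ, φⁿ⟫` per step, and the estimate telescopes.
-/

open scoped RealInnerProductSpace

section EnergyEstimates

variable {H : Type*} [NormedAddCommGroup H] [InnerProductSpace ℝ H]

lemma inner_map_self_nonneg_of_coercive {D : H →ₗ[ℝ] H}
    (hD : ∃ ν > (0:ℝ), ∀ x : H, ν * ‖x‖ ^ 2 ≤ ⟪D x, x⟫) (x : H) : 0 ≤ ⟪D x, x⟫ := by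
  obtain ⟨ν, hν, h⟩ := hD
  exact (by positivity : 0 ≤ ν * ‖x‖ ^ 2).trans (h x)

lemma two_mul_inner_weighted_average_sub {D : H →ₗ[ℝ] H}
    (hD : ∀ x y : H, ⟪D x, y⟫ = ⟪x, D y⟫) (σ : ℝ) (p q : H) :
    2 * ⟪D (σ • q + (1 - σ) • p), q - p⟫
      = ⟪D q, q⟫ - ⟪D p, p⟫ + (2 * σ - 1) * ⟪D (q - p), q - p⟫ := by
  have hpq : ⟪D p, q⟫ = ⟪D q, p⟫ := by rw [hD, real_inner_comm]
  simp only [map_add, map_sub, map_smul, inner_add_left, inner_sub_left, inner_sub_right,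
    real_inner_smul_left]
  linear_combination hpq

lemma inner_map_self_sub_le_two_mul_inner_weighted_average {D : H →ₗ[ℝ] H}
    (hD : ∀ x y : H, ⟪D x, y⟫ = ⟪x, D y⟫) (hD₀ : ∀ x : H, 0 ≤ ⟪D x, x⟫)
    {σ : ℝ} (hσ : 1 / 2 ≤ σ) (p q : H) :
    ⟪D q, q⟫ - ⟪D p, p⟫ ≤ 2 * ⟪D (σ • q + (1 - σ) • p), q - p⟫ := by
  rw [two_mul_inner_weighted_average_sub hD]
  have : 0 ≤ (2 * σ - 1) * ⟪D (q - p), q - p⟫ := mul_nonneg (by linarith) (hD₀ _)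
  linarith

lemma two_mul_mul_inner_le_of_rightInverse {B Binv : H →ₗ[ℝ] H}
    (hB : ∀ x y : H, ⟪B x, y⟫ = ⟪x, B y⟫) (hB₀ : ∀ x : H, 0 ≤ ⟪B x, x⟫)
    (hBinv : ∀ x : H, B (Binv x) = x) (t : ℝ) (φ d : H) :
    2 * t * ⟪φ, d⟫ ≤ 2 * ⟪B d, d⟫ + t ^ 2 / 2 * ⟪Binv φ, φ⟫ := by
  have h := hB₀ (d - (t / 2) • Binv φ)
  have hcross : ⟪B d, Binv φ⟫ = ⟪φ, d⟫ := by rw [hB, hBinv, real_inner_comm]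
  simp only [map_sub, map_smul, hBinv, inner_sub_left, inner_sub_right, real_inner_smul_left,
    real_inner_smul_right, hcross, real_inner_comm (Binv φ) φ] at h
  linarith

variable {ι : Type*} [Fintype ι]

def schemeEnergy (A C : H →ₗ[ℝ] H) (a : ι → ℝ) (u : H) (ui : ι → H) : ℝ :=
  ⟪A u, u⟫ + ∑ i, a i * ⟪C (ui i), ui i⟫

variable (A B C Binv : H →ₗ[ℝ] H) (a b : ι → ℝ) (τ σ : ℝ) (p q : H) (pi qi : ι → H) (φ : H)

lemma scheme_step_canonical_form (hb : ∀ i, b i ≠ 0)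
    (heq : (τ⁻¹ • (B (q - p) + ∑ i, (a i / b i) • C (q - p)))
        - (τ⁻¹ • ∑ i, (a i / b i) • C (qi i - pi i))
        + A (σ • q + (1 - σ) • p) = φ)
    (heqi : ∀ i, τ⁻¹ • (qi i - pi i) + b i • (σ • qi i + (1 - σ) • pi i)
        - τ⁻¹ • (q - p) = 0) :
    τ⁻¹ • B (q - p) + A (σ • q + (1 - σ) • p)
      + ∑ i, a i • C (σ • qi i + (1 - σ) • pi i) = φ := by
  have hterm : ∀ i, (a i / b i) • (τ⁻¹ • C (q - p) - τ⁻¹ • C (qi i - pi i))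
      = a i • C (σ • qi i + (1 - σ) • pi i) := by
    intro i
    have hdiff : τ⁻¹ • (q - p) - τ⁻¹ • (qi i - pi i) = b i • (σ • qi i + (1 - σ) • pi i) := by
      rw [← sub_eq_zero.mp (heqi i), add_sub_cancel_left]
    rw [← map_smul, ← map_smul, ← map_sub, hdiff, map_smul, smul_smul, div_mul_cancel₀ _ (hb i)]
  rw [← heq, ← Finset.sum_congr rfl fun i _ => hterm i]
  simp only [smul_add, Finset.smul_sum, smul_sub, Finset.sum_sub_distrib, smul_comm τ⁻¹]
  abel

lemma schemeEnergy_step_le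
    (hA : ∀ x y : H, ⟪A x, y⟫ = ⟪x, A y⟫) (hA₀ : ∀ x : H, 0 ≤ ⟪A x, x⟫)
    (hB : ∀ x y : H, ⟪B x, y⟫ = ⟪x, B y⟫) (hB₀ : ∀ x : H, 0 ≤ ⟪B x, x⟫)
    (hBinv : ∀ x : H, B (Binv x) = x)
    (hC : ∀ x y : H, ⟪C x, y⟫ = ⟪x, C y⟫) (hC₀ : ∀ x : H, 0 ≤ ⟪C x, x⟫)
    (ha : ∀ i, 0 ≤ a i) (hb : ∀ i, 0 < b i) (hτ : 0 < τ) (hσ : 1 / 2 ≤ σ)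
    (heq : (τ⁻¹ • (B (q - p) + ∑ i, (a i / b i) • C (q - p)))
        - (τ⁻¹ • ∑ i, (a i / b i) • C (qi i - pi i))
        + A (σ • q + (1 - σ) • p) = φ)
    (heqi : ∀ i, τ⁻¹ • (qi i - pi i) + b i • (σ • qi i + (1 - σ) • pi i)
        - τ⁻¹ • (q - p) = 0) :
    schemeEnergy A C a q qi ≤ schemeEnergy A C a p pi + τ / 2 * ⟪Binv φ, φ⟫ := by
  set d := q - p
  set s := σ • q + (1 - σ) • p
  set si : ι → H := fun i => σ • qi i + (1 - σ) • pi i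
  have hcan : τ⁻¹ • B d + A s + ∑ i, a i • C (si i) = φ :=
    scheme_step_canonical_form A B C a b τ σ p q pi qi φ (fun i => (hb i).ne') heq heqi
  have hrel : ∀ i, τ⁻¹ • (qi i - pi i) + b i • si i = τ⁻¹ • d := fun i => sub_eq_zero.mp (heqi i)
  have hpair : ⟪B d, d⟫ + τ * (⟪A s, d⟫ + ∑ i, a i * ⟪C (si i), d⟫) = τ * ⟪φ, d⟫ := by
    rw [← hcan]
    simp only [inner_add_left, sum_inner, real_inner_smul_left]
    field_simp
    ring
  have hsplit : ∀ i, ⟪C (si i), d⟫ = ⟪C (si i), qi i - pi i⟫ + τ * b i * ⟪C (si i), si i⟫ := by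
    intro i
    have h := congrArg (⟪C (si i), ·⟫) (hrel i)
    simp only [inner_add_right, real_inner_smul_right] at h
    field_simp at h
    linear_combination -h
  have hCinc : ∑ i, a i * ⟪C (qi i), qi i⟫ - ∑ i, a i * ⟪C (pi i), pi i⟫
      ≤ 2 * ∑ i, a i * ⟪C (si i), d⟫ := by
    rw [← Finset.sum_sub_distrib, Finset.mul_sum]
    refine Finset.sum_le_sum fun i _ => ?_
    have hinc := inner_map_self_sub_le_two_mul_inner_weighted_average hC hC₀ hσ (pi i) (qi i)
    have hdiss : 0 ≤ τ * b i * ⟪C (si i), si i⟫ :=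
      mul_nonneg (mul_pos hτ (hb i)).le (hC₀ (si i))
    have h : ⟪C (qi i), qi i⟫ - ⟪C (pi i), pi i⟫ ≤ 2 * ⟪C (si i), d⟫ := by linarith [hsplit i]
    linarith [mul_le_mul_of_nonneg_left h (ha i)]
  have hinc : schemeEnergy A C a q qi - schemeEnergy A C a p pi
      ≤ 2 * (⟪A s, d⟫ + ∑ i, a i * ⟪C (si i), d⟫) := by
    have := inner_map_self_sub_le_two_mul_inner_weighted_average hA hA₀ hσ p q
    unfold schemeEnergy
    linarith
  have hyoung := two_mul_mul_inner_le_of_rightInverse hB hB₀ hBinv τ φ d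
  have : τ * (schemeEnergy A C a q qi - schemeEnergy A C a p pi) ≤ τ * (τ / 2 * ⟪Binv φ, φ⟫) :=
    calc τ * (schemeEnergy A C a q qi - schemeEnergy A C a p pi)
        ≤ τ * (2 * (⟪A s, d⟫ + ∑ i, a i * ⟪C (si i), d⟫)) := mul_le_mul_of_nonneg_left hinc hτ.le
      _ = 2 * τ * ⟪φ, d⟫ - 2 * ⟪B d, d⟫ := by linear_combination 2 * hpair
      _ ≤ τ * (τ / 2 * ⟪Binv φ, φ⟫) := by linarith
  linarith [le_of_mul_le_mul_left this hτ]

end EnergyEstimates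

theorem stability_two_level_scheme_general
    {H : Type*} [NormedAddCommGroup H] [InnerProductSpace ℝ H]
    (A B C Binv : H →ₗ[ℝ] H)
    (hAsa : ∀ x y : H, ⟪A x, y⟫ = ⟪x, A y⟫)
    (hBsa : ∀ x y : H, ⟪B x, y⟫ = ⟪x, B y⟫)
    (hCsa : ∀ x y : H, ⟪C x, y⟫ = ⟪x, C y⟫)
    (hApd : ∃ ν > (0:ℝ), ∀ x : H, ν * ‖x‖ ^ 2 ≤ ⟪A x, x⟫)
    (hBpd : ∃ ν > (0:ℝ), ∀ x : H, ν * ‖x‖ ^ 2 ≤ ⟪B x, x⟫)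
    (hCpd : ∃ ν > (0:ℝ), ∀ x : H, ν * ‖x‖ ^ 2 ≤ ⟪C x, x⟫)
    (hBinv₁ : ∀ x : H, B (Binv x) = x)
    (m : ℕ) (a b : Fin m → ℝ) (ha : ∀ i, 0 < a i) (hb : ∀ i, 0 < b i)
    (τ : ℝ) (hτ : 0 < τ) (σ : ℝ) (hσ : 1 / 2 ≤ σ)
    (y : ℕ → H) (yi : Fin m → ℕ → H) (φ : ℕ → H)
    (u₀ : H) (hy0 : y 0 = u₀) (hyi0 : ∀ i, yi i 0 = 0)
    (heq : ∀ n : ℕ,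
      (τ⁻¹ • (B (y (n + 1) - y n) + ∑ i, (a i / b i) • C (y (n + 1) - y n)))
        - (τ⁻¹ • ∑ i, (a i / b i) • C (yi i (n + 1) - yi i n))
        + A (σ • y (n + 1) + (1 - σ) • y n) = φ n)
    (heqi : ∀ i, ∀ n : ℕ,
      τ⁻¹ • (yi i (n + 1) - yi i n) + b i • (σ • yi i (n + 1) + (1 - σ) • yi i n)
        - τ⁻¹ • (y (n + 1) - y n) = 0) :
    ∀ n : ℕ,
      ⟪A (y (n + 1)), y (n + 1)⟫ + (∑ i, a i * ⟪C (yi i (n + 1)), yi i (n + 1)⟫)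
        ≤ ⟪A u₀, u₀⟫
          + (1 / 2) * ∑ k ∈ Finset.range (n + 1), τ * ⟪Binv (φ k), φ k⟫ := by
  intro n
  let E k := schemeEnergy A C a (y k) (fun i => yi i k)
  have hstep (k : ℕ) : E (k + 1) ≤ E k + τ / 2 * ⟪Binv (φ k), φ k⟫ :=
    schemeEnergy_step_le A B C Binv a b τ σ (y k) (y (k + 1)) (yi · k) (yi · (k + 1)) (φ k)
      hAsa (inner_map_self_nonneg_of_coercive hApd) hBsa (inner_map_self_nonneg_of_coercive hBpd)
      hBinv₁ hCsa (inner_map_self_nonneg_of_coercive hCpd) (fun i => (ha i).le) hb hτ hσ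
      (heq k) (fun i => heqi i k)
  have hE₀ : E 0 = ⟪A u₀, u₀⟫ := by simp [E, schemeEnergy, hy0, hyi0]
  have htelescope : E (n + 1) - E 0 ≤ ∑ k ∈ Finset.range (n + 1), τ / 2 * ⟪Binv (φ k), φ k⟫ := by
    rw [← Finset.sum_range_sub E]
    exact Finset.sum_le_sum fun k _ => by linarith [hstep k]
  have hhalf : (1 / 2) * ∑ k ∈ Finset.range (n + 1), τ * ⟪Binv (φ k), φ k⟫
      = ∑ k ∈ Finset.range (n + 1), τ / 2 * ⟪Binv (φ k), φ k⟫ := by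
    rw [Finset.mul_sum]
    exact Finset.sum_congr rfl fun k _ => by ring
  change E (n + 1) ≤ _
  linarith

/-- **Theorem 3.** Unconditional stability of the two-level scheme with
weight `σ ≥ 1/2`: the a priori estimate
`‖yⁿ⁺¹‖²_A + Σᵢ aᵢ ‖yᵢⁿ⁺¹‖²_C ≤ ‖u₀‖²_A + (1/2) Σₖ τ ‖φᵏ‖²_{B⁻¹}`. -/
theorem stability_two_level_scheme
    {H : Type*} [NormedAddCommGroup H] [InnerProductSpace ℝ H] [FiniteDimensional ℝ H]
    (A B C Binv : H →ₗ[ℝ] H)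
    (hAsa : ∀ x y : H, ⟪A x, y⟫ = ⟪x, A y⟫)
    (hBsa : ∀ x y : H, ⟪B x, y⟫ = ⟪x, B y⟫)
    (hCsa : ∀ x y : H, ⟪C x, y⟫ = ⟪x, C y⟫)
    (hApd : ∃ ν > (0:ℝ), ∀ x : H, ν * ‖x‖ ^ 2 ≤ ⟪A x, x⟫)
    (hBpd : ∃ ν > (0:ℝ), ∀ x : H, ν * ‖x‖ ^ 2 ≤ ⟪B x, x⟫)
    (hCpd : ∃ ν > (0:ℝ), ∀ x : H, ν * ‖x‖ ^ 2 ≤ ⟪C x, x⟫)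
    (hBinv₁ : ∀ x : H, B (Binv x) = x)
    (hBinv₂ : ∀ x : H, Binv (B x) = x)
    (m : ℕ) (a b : Fin m → ℝ) (ha : ∀ i, 0 < a i) (hb : ∀ i, 0 < b i)
    (τ : ℝ) (hτ : 0 < τ) (σ : ℝ) (hσ : 1 / 2 ≤ σ)
    (y : ℕ → H) (yi : Fin m → ℕ → H) (φ : ℕ → H)
    (u₀ : H) (hy0 : y 0 = u₀) (hyi0 : ∀ i, yi i 0 = 0)
    (heq : ∀ n : ℕ,
      (τ⁻¹ • (B (y (n + 1) - y n) + ∑ i, (a i / b i) • C (y (n + 1) - y n)))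
        - (τ⁻¹ • ∑ i, (a i / b i) • C (yi i (n + 1) - yi i n))
        + A (σ • y (n + 1) + (1 - σ) • y n) = φ n)
    (heqi : ∀ i, ∀ n : ℕ,
      τ⁻¹ • (yi i (n + 1) - yi i n) + b i • (σ • yi i (n + 1) + (1 - σ) • yi i n)
        - τ⁻¹ • (y (n + 1) - y n) = 0) :
    ∀ n : ℕ,
      ⟪A (y (n + 1)), y (n + 1)⟫ + (∑ i, a i * ⟪C (yi i (n + 1)), yi i (n + 1)⟫)
        ≤ ⟪A u₀, u₀⟫
          + (1 / 2) * ∑ k ∈ Finset.range (n + 1), τ * ⟪Binv (φ k), φ k⟫ :=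
  stability_two_level_scheme_general A B C Binv hAsa hBsa hCsa hApd hBpd hCpd hBinv₁ m a b ha hb τ
    hτ σ hσ y yi φ u₀ hy0 hyi0 heq heqi
end

section
/- Let H be a finite-dimensional real Hilbert space and let A, B, C be self-adjoint positive definite linear operators on H. Let a₁,…,a_m > 0, b₁,…,b_m > 0, τ > 0, and σ ≥ 1/2. Suppose y⁰, y¹ ∈ H, y_i⁰, y_i¹ ∈ H (i = 1,…,m), and φ ∈ H satisfy (writing y^σ = σ y¹ + (1−σ) y⁰ and y_i^σ = σ y_i¹ + (1−σ) y_i⁰): (B + Σ_{i=1}^m (a_i/b_i) C)(y¹ − y⁰)/τ − Σ_{i=1}^m (a_i/b_i) C (y_i¹ − y_i⁰)/τ + A y^σ = φ, and (y_i¹ − y_i⁰)/τ + b_i y_i^σ − (y¹ − y⁰)/τ = 0 for each i. Then ⟪A y¹, y¹⟫ + Σ_{i=1}^m a_i ⟪C y_i¹, y_i¹⟫ − ⟪A y⁰, y⁰⟫ − Σ_{i=1}^m a_i ⟪C y_i⁰, y_i⁰⟫ ≤ (τ/2) ⟪B⁻¹ φ, φ⟫. -/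
open scoped RealInnerProductSpace

section Aux

variable {H : Type*} [NormedAddCommGroup H] [InnerProductSpace ℝ H]

lemma sa_diff (D : H →ₗ[ℝ] H) (hD : ∀ x y : H, ⟪D x, y⟫ = ⟪x, D y⟫) (p q : H) :
    ⟪D p, p⟫ - ⟪D q, q⟫ = ⟪D (p + q), p - q⟫ := by
  have h : ⟪D q, p⟫ = ⟪D p, q⟫ := by rw [hD, real_inner_comm]
  rw [map_add, inner_add_left, inner_sub_right, inner_sub_right]
  linarith

lemma step_ineq (D : H →ₗ[ℝ] H) (hD : ∀ x y : H, ⟪D x, y⟫ = ⟪x, D y⟫)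
    (hpsd : ∀ x : H, 0 ≤ ⟪D x, x⟫) {τ σ : ℝ} (hτ : 0 < τ) (hσ : 1 / 2 ≤ σ)
    (p q : H) :
    ⟪D p, p⟫ - ⟪D q, q⟫ ≤ 2 * τ * ⟪D (σ • p + (1 - σ) • q), τ⁻¹ • (p - q)⟫ := by
  have hdec : σ • p + (1 - σ) • q = (1/2 : ℝ) • (p + q) + (σ - 1/2) • (p - q) := by
    module
  rw [hdec, map_add, map_smul, map_smul, inner_add_left, real_inner_smul_left,
    real_inner_smul_left, real_inner_smul_right, real_inner_smul_right,
    sa_diff D hD p q]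
  have h1 : 0 ≤ ⟪D (p - q), p - q⟫ := hpsd _
  have h3 : 0 ≤ σ - 1/2 := by linarith
  have e : 2 * τ * (1 / 2 * (τ⁻¹ * ⟪D (p + q), p - q⟫)
        + (σ - 1 / 2) * (τ⁻¹ * ⟪D (p - q), p - q⟫))
      = ⟪D (p + q), p - q⟫ + 2 * ((σ - 1/2) * ⟪D (p - q), p - q⟫) := by
    field_simp
  rw [e]
  linarith [mul_nonneg h3 h1]

end Aux

/-- One-step energy decay estimate for the two-level scheme with weight
`σ ≥ 1/2`. -/
theorem one_step_energy_estimate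
    {H : Type*} [NormedAddCommGroup H] [InnerProductSpace ℝ H] [FiniteDimensional ℝ H]
    (A B C Binv : H →ₗ[ℝ] H)
    (hAsa : ∀ x y : H, ⟪A x, y⟫ = ⟪x, A y⟫)
    (hBsa : ∀ x y : H, ⟪B x, y⟫ = ⟪x, B y⟫)
    (hCsa : ∀ x y : H, ⟪C x, y⟫ = ⟪x, C y⟫)
    (hApd : ∃ ν > (0:ℝ), ∀ x : H, ν * ‖x‖ ^ 2 ≤ ⟪A x, x⟫)
    (hBpd : ∃ ν > (0:ℝ), ∀ x : H, ν * ‖x‖ ^ 2 ≤ ⟪B x, x⟫)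
    (hCpd : ∃ ν > (0:ℝ), ∀ x : H, ν * ‖x‖ ^ 2 ≤ ⟪C x, x⟫)
    (hBinv₁ : ∀ x : H, B (Binv x) = x)
    (hBinv₂ : ∀ x : H, Binv (B x) = x)
    (m : ℕ) (a b : Fin m → ℝ) (ha : ∀ i, 0 < a i) (hb : ∀ i, 0 < b i)
    (τ : ℝ) (hτ : 0 < τ) (σ : ℝ) (hσ : 1 / 2 ≤ σ)
    (y0 y1 : H) (yi0 yi1 : Fin m → H) (φ : H)
    (heq :
      (τ⁻¹ • (B (y1 - y0) + ∑ i, (a i / b i) • C (y1 - y0)))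
        - (τ⁻¹ • ∑ i, (a i / b i) • C (yi1 i - yi0 i))
        + A (σ • y1 + (1 - σ) • y0) = φ)
    (heqi : ∀ i,
      τ⁻¹ • (yi1 i - yi0 i) + b i • (σ • yi1 i + (1 - σ) • yi0 i)
        - τ⁻¹ • (y1 - y0) = 0) :
    ⟪A y1, y1⟫ + (∑ i, a i * ⟪C (yi1 i), yi1 i⟫)
      - ⟪A y0, y0⟫ - (∑ i, a i * ⟪C (yi0 i), yi0 i⟫)
      ≤ (τ / 2) * ⟪Binv φ, φ⟫ := by
  obtain ⟨νA, hνA, hApd⟩ := hApd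
  obtain ⟨νB, hνB, hBpd⟩ := hBpd
  obtain ⟨νC, hνC, hCpd⟩ := hCpd
  have hApsd : ∀ x : H, 0 ≤ ⟪A x, x⟫ := fun x => le_trans (by positivity) (hApd x)
  have hBpsd : ∀ x : H, 0 ≤ ⟪B x, x⟫ := fun x => le_trans (by positivity) (hBpd x)
  have hCpsd : ∀ x : H, 0 ≤ ⟪C x, x⟫ := fun x => le_trans (by positivity) (hCpd x)
  obtain ⟨v, hv⟩ : ∃ v : H, v = τ⁻¹ • (y1 - y0) := ⟨_, rfl⟩
  obtain ⟨yσ, hyσ⟩ : ∃ z : H, z = σ • y1 + (1 - σ) • y0 := ⟨_, rfl⟩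
  obtain ⟨yiσ, hyiσ⟩ : ∃ w : Fin m → H,
      ∀ i, w i = σ • yi1 i + (1 - σ) • yi0 i := ⟨_, fun _ => rfl⟩
  -- the auxiliary equations
  have hvi : ∀ i, τ⁻¹ • (yi1 i - yi0 i) = v - b i • yiσ i := by
    intro i
    have h := heqi i
    rw [sub_eq_zero] at h
    rw [hv, hyiσ]
    linear_combination (norm := module) h
  -- main equation rewritten
  have hmain : B v + (∑ i, a i • C (yiσ i)) + A yσ = φ := by
    rw [← heq, hyσ, hv, smul_add, ← map_smul B, Finset.smul_sum, Finset.smul_sum]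
    have e1 : ∀ i ∈ (Finset.univ : Finset (Fin m)),
        τ⁻¹ • ((a i / b i) • C (y1 - y0)) = (a i / b i) • C (τ⁻¹ • (y1 - y0)) := by
      intro i _
      rw [smul_comm, ← map_smul]
    have e2 : ∀ i ∈ (Finset.univ : Finset (Fin m)),
        τ⁻¹ • ((a i / b i) • C (yi1 i - yi0 i))
          = (a i / b i) • C (τ⁻¹ • (y1 - y0)) - a i • C (yiσ i) := by
      intro i _
      have hCv : C (τ⁻¹ • (yi1 i - yi0 i)) = C (τ⁻¹ • (y1 - y0)) - b i • C (yiσ i) := by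
        rw [hvi i, map_sub, map_smul, hv]
      calc τ⁻¹ • ((a i / b i) • C (yi1 i - yi0 i))
          = (a i / b i) • C (τ⁻¹ • (yi1 i - yi0 i)) := by rw [smul_comm, ← map_smul]
        _ = (a i / b i) • C (τ⁻¹ • (y1 - y0)) - (a i / b i * b i) • C (yiσ i) := by
            rw [hCv, smul_sub, smul_smul]
        _ = (a i / b i) • C (τ⁻¹ • (y1 - y0)) - a i • C (yiσ i) := by
            rw [div_mul_cancel₀ _ (hb i).ne']
    rw [Finset.sum_congr rfl e1, Finset.sum_congr rfl e2, Finset.sum_sub_distrib]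
    abel
  have hφv : ⟪φ, v⟫ = ⟪B v, v⟫ + (∑ i, a i * ⟪C (yiσ i), v⟫) + ⟪A yσ, v⟫ := by
    rw [← hmain, inner_add_left, inner_add_left, sum_inner]
    simp [real_inner_smul_left]
  -- A inequality
  have hA : ⟪A y1, y1⟫ - ⟪A y0, y0⟫ ≤ 2 * τ * ⟪A yσ, v⟫ := by
    have h := step_ineq A hAsa hApsd hτ hσ y1 y0
    rwa [← hyσ, ← hv] at h
  -- C inequalities
  have hC : ∀ i, ⟪C (yi1 i), yi1 i⟫ - ⟪C (yi0 i), yi0 i⟫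
      ≤ 2 * τ * ⟪C (yiσ i), v⟫ := by
    intro i
    have h1 := step_ineq C hCsa hCpsd hτ hσ (yi1 i) (yi0 i)
    rw [show σ • yi1 i + (1 - σ) • yi0 i = yiσ i from (hyiσ i).symm] at h1
    have h2 : ⟪C (yiσ i), τ⁻¹ • (yi1 i - yi0 i)⟫ ≤ ⟪C (yiσ i), v⟫ := by
      have hveq : v = τ⁻¹ • (yi1 i - yi0 i) + b i • yiσ i := by
        rw [hvi i]; abel
      rw [hveq, inner_add_right, real_inner_smul_right, real_inner_smul_right]
      have := mul_nonneg (hb i).le (hCpsd (yiσ i))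
      linarith
    calc ⟪C (yi1 i), yi1 i⟫ - ⟪C (yi0 i), yi0 i⟫
        ≤ 2 * τ * ⟪C (yiσ i), τ⁻¹ • (yi1 i - yi0 i)⟫ := h1
      _ ≤ 2 * τ * ⟪C (yiσ i), v⟫ :=
          mul_le_mul_of_nonneg_left h2 (by linarith)
  have hCsum : (∑ i, a i * ⟪C (yi1 i), yi1 i⟫) - (∑ i, a i * ⟪C (yi0 i), yi0 i⟫)
      ≤ 2 * τ * ∑ i, a i * ⟪C (yiσ i), v⟫ := by
    rw [← Finset.sum_sub_distrib, Finset.mul_sum]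
    apply Finset.sum_le_sum
    intro i _
    have h := mul_le_mul_of_nonneg_left (hC i) (ha i).le
    nlinarith [h]
  -- final Cauchy-type bound
  have hfinal : 2 * τ * ⟪φ, v⟫ - 2 * τ * ⟪B v, v⟫ ≤ (τ / 2) * ⟪Binv φ, φ⟫ := by
    have h := hBpsd (v - (1/2 : ℝ) • Binv φ)
    have hBw : B ((1/2 : ℝ) • Binv φ) = (1/2 : ℝ) • φ := by
      rw [map_smul, hBinv₁]
    have h1 : ⟪B v, Binv φ⟫ = ⟪φ, v⟫ := by
      rw [hBsa, hBinv₁]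
      exact real_inner_comm _ _
    have h2 : ⟪φ, Binv φ⟫ = ⟪Binv φ, φ⟫ := real_inner_comm _ _
    have hexp : ⟪B (v - (1/2 : ℝ) • Binv φ), v - (1/2 : ℝ) • Binv φ⟫
        = ⟪B v, v⟫ - ⟪φ, v⟫ + (1/4 : ℝ) * ⟪Binv φ, φ⟫ := by
      rw [map_sub, hBw]
      simp only [inner_sub_left, inner_sub_right, real_inner_smul_left,
        real_inner_smul_right]
      rw [h1, h2]
      ring
    rw [hexp] at h
    have h3 := mul_le_mul_of_nonneg_left h (by linarith : (0:ℝ) ≤ 2 * τ)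
    nlinarith [h3]
  have hφv' : 2 * τ * ⟪φ, v⟫
      = 2 * τ * ⟪B v, v⟫ + 2 * τ * (∑ i, a i * ⟪C (yiσ i), v⟫)
        + 2 * τ * ⟪A yσ, v⟫ := by rw [hφv]; ring
  linarith [hA, hCsum, hfinal, hφv']
end
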